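/- arXiv:1807.10302 — 2 statements merged into one kernel-verified Lean document; each statement's English description precedes it below -/
import Mathlib

section
/- A threshold graph has no eigenvalue λ with −1 < λ < 0; that is, no eigenvalue of the adjacency matrix of a threshold graph lies in the open interval (−1, 0). -/
/-!
Write `l = -μ ∈ (0, 1)` and `A_s` for the adjacency matrix induced on a vertex set `s`.
Every nonempty vertex set of a threshold graph contains a vertex that is isolated or dominating
in it, so each `s` is built up from `∅` by adding such vertices. Along the way, track the solution
`h` of `(A_s + l) h = 1` and `σ = ∑ h`, which is `0` for `s = ∅` and `> 1` afterwards: an isolated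
vertex turns `σ` into `σ + 1/l`, a dominating one into `σ + (1 - σ)² / (l - σ)` (Schur complement).
As `σ ≠ l`, the Schur complement `l - σ` of a dominating vertex never vanishes, so `A_s + l` stays
nonsingular, and `-l` is never an eigenvalue.
-/

/-- A graph is a threshold graph if adjacency is determined by vertex weights
exceeding a threshold. -/
def SimpleGraph.IsThreshold {V : Type*} (G : SimpleGraph V) : Prop :=
  ∃ (S : ℝ) (w : V → ℝ), ∀ u v : V, u ≠ v → (G.Adj u v ↔ S < w u + w v)

/-- `μ` is an eigenvalue of the adjacency matrix of `G`. -/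
def SimpleGraph.HasAdjEigenvalue {V : Type*} [Fintype V] (G : SimpleGraph V) (μ : ℝ) : Prop :=
  letI := Classical.decEq V
  letI : DecidableRel G.Adj := Classical.decRel _
  ∃ x : V → ℝ, x ≠ 0 ∧ (G.adjMatrix ℝ).mulVec x = μ • x

open Finset Function

namespace SimpleGraph

variable {V : Type*} {G : SimpleGraph V}

theorem IsThreshold.exists_isolated_or_dominating (hG : G.IsThreshold) {s : Finset V}
    (hs : s.Nonempty) :
    ∃ v ∈ s, (∀ u ∈ s, ¬ G.Adj v u) ∨ ∀ u ∈ s, u ≠ v → G.Adj v u := by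
  obtain ⟨S, w, hw⟩ := hG
  obtain ⟨vmin, hvmin, hmin⟩ := s.exists_min_image w hs
  obtain ⟨vmax, hvmax, hmax⟩ := s.exists_max_image w hs
  by_cases hiso : ∀ u ∈ s, ¬ G.Adj vmin u
  · exact ⟨vmin, hvmin, .inl hiso⟩
  -- a neighbour `u₀` of the lightest vertex forces `S < w u₀ + w vmin ≤ w vmax + w u` for all `u`
  push Not at hiso
  obtain ⟨u₀, hu₀, hadj⟩ := hiso
  refine ⟨vmax, hvmax, .inr fun u hu hne => (hw vmax u hne.symm).2 ?_⟩
  have := (hw vmin u₀ hadj.ne).1 hadj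
  linarith [hmax u₀ hu₀, hmin u hu]

@[elab_as_elim]
theorem IsThreshold.finset_induction [DecidableEq V] (hG : G.IsThreshold)
    {P : Finset V → Prop} (empty : P ∅)
    (isolated : ∀ v s, v ∉ s → (∀ u ∈ s, ¬ G.Adj v u) → P s → P (insert v s))
    (dominating : ∀ v s, v ∉ s → (∀ u ∈ s, G.Adj v u) → P s → P (insert v s))
    (s : Finset V) : P s := by
  induction s using Finset.strongInduction with
  | H s ih =>
  obtain rfl | hs := s.eq_empty_or_nonempty
  · exact empty
  obtain ⟨v, hv, hiso | hdom⟩ := hG.exists_isolated_or_dominating hs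
  all_goals rw [← insert_erase hv]
  · exact isolated v _ (notMem_erase v s) (fun u hu => hiso u (mem_of_mem_erase hu))
      (ih _ (erase_ssubset hv))
  · exact dominating v _ (notMem_erase v s)
      (fun u hu => hdom u (mem_of_mem_erase hu) (ne_of_mem_erase hu)) (ih _ (erase_ssubset hv))

variable [DecidableRel G.Adj]

variable (G) in
/-- The adjacency matrix of `G.induce s`, acting on vectors indexed by all of `V`;
entries outside `s` are ignored. -/
def adjOn (s : Finset V) : (V → ℝ) →ₗ[ℝ] V → ℝ where
  toFun x v := ∑ u ∈ s, if G.Adj v u then x u else 0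
  map_add' x y := by ext v; simp only [Pi.add_apply, ← sum_add_distrib, ite_add_ite, add_zero]
  map_smul' c x := by ext v; simp [mul_sum]

theorem adjOn_apply (s : Finset V) (x : V → ℝ) (w : V) :
    G.adjOn s x w = ∑ u ∈ s, if G.Adj w u then x u else 0 := rfl

theorem adjOn_insert [DecidableEq V] {v : V} {s : Finset V} (hv : v ∉ s) (x : V → ℝ) (w : V) :
    G.adjOn (insert v s) x w = (if G.Adj w v then x v else 0) + G.adjOn s x w :=
  sum_insert hv

theorem adjOn_congr {s : Finset V} {x y : V → ℝ} (h : ∀ u ∈ s, x u = y u) (w : V) :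
    G.adjOn s x w = G.adjOn s y w :=
  sum_congr rfl fun u hu => by rw [h u hu]

theorem adjOn_eq_zero_of_forall_not_adj {s : Finset V} {w : V} (h : ∀ u ∈ s, ¬ G.Adj w u)
    (x : V → ℝ) : G.adjOn s x w = 0 :=
  sum_eq_zero fun u hu => if_neg (h u hu)

theorem adjOn_eq_sum_of_forall_adj {s : Finset V} {w : V} (h : ∀ u ∈ s, G.Adj w u)
    (x : V → ℝ) : G.adjOn s x w = ∑ u ∈ s, x u :=
  sum_congr rfl fun u hu => if_pos (h u hu)

theorem adjOn_univ [Fintype V] (x : V → ℝ) : G.adjOn univ x = (G.adjMatrix ℝ).mulVec x := by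
  ext w
  simp [adjOn_apply, Matrix.mulVec, dotProduct]

theorem adjOn_insert_update [DecidableEq V] {v : V} {s : Finset V} (hv : v ∉ s) (x : V → ℝ)
    (c : ℝ) (w : V) :
    G.adjOn (insert v s) (update x v c) w = (if G.Adj w v then c else 0) + G.adjOn s x w := by
  rw [adjOn_insert hv, update_self,
    adjOn_congr fun u hu => update_of_ne (ne_of_mem_of_not_mem hu hv) _ _]

section

variable [DecidableEq V] (hG : G.IsThreshold) {l : ℝ} (hl₀ : 0 < l) (hl₁ : l < 1)
include hG hl₀ hl₁

theorem IsThreshold.exists_adjOn_add_mul_eq_one (s : Finset V) :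
    ∃ h : V → ℝ, (∀ w ∈ s, G.adjOn s h w + l * h w = 1) ∧
      (∑ w ∈ s, h w = 0 ∨ 1 < ∑ w ∈ s, h w) := by
  induction s using hG.finset_induction with
  | empty => exact ⟨0, by simp, .inl (by simp)⟩
  | isolated v e hv hiso ih =>
    obtain ⟨h, hh, hσ⟩ := ih
    refine ⟨update h v l⁻¹, (forall_mem_insert _ _ _).2 ⟨?_, fun w hw => ?_⟩, .inr ?_⟩
    · rw [adjOn_insert_update hv, if_neg G.irrefl, adjOn_eq_zero_of_forall_not_adj hiso,
        update_self, zero_add, zero_add, mul_inv_cancel₀ hl₀.ne']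
    · rw [adjOn_insert_update hv, if_neg fun hwv => hiso w hw hwv.symm, zero_add,
        update_of_ne (ne_of_mem_of_not_mem hw hv)]
      exact hh w hw
    · rw [sum_insert hv, update_self, sum_update_of_notMem hv]
      have := (one_lt_inv₀ hl₀).2 hl₁
      rcases hσ with hσ | hσ <;> linarith
  | dominating v e hv hdom ih =>
    obtain ⟨h, hh, hσ⟩ := ih
    set σ := ∑ u ∈ e, h u
    have hσl : l - σ ≠ 0 := by rcases hσ with hσ | hσ <;> linarith
    set t := (1 - σ) / (l - σ)
    have ht : t * (l - σ) = 1 - σ := div_mul_cancel₀ _ hσl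
    refine ⟨update ((1 - t) • h) v t, (forall_mem_insert _ _ _).2 ⟨?_, fun w hw => ?_⟩, .inr ?_⟩
    · rw [adjOn_insert_update hv, if_neg G.irrefl, map_smul, Pi.smul_apply,
        adjOn_eq_sum_of_forall_adj hdom, update_self, smul_eq_mul]
      linear_combination ht
    · rw [adjOn_insert_update hv, if_pos (hdom w hw).symm, map_smul, Pi.smul_apply,
        update_of_ne (ne_of_mem_of_not_mem hw hv), Pi.smul_apply, smul_eq_mul, smul_eq_mul]
      linear_combination (1 - t) * hh w hw
    · rw [sum_insert hv, update_self, sum_update_of_notMem hv]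
      simp only [Pi.smul_apply, smul_eq_mul, ← mul_sum]
      have h1t : (1 - t) * (l - σ) = l - 1 := by linear_combination -ht
      suffices 0 < (1 - t) * (σ - 1) by linarith
      rcases hσ with hσ | hσ <;> nlinarith

theorem IsThreshold.eq_zero_of_adjOn_add_mul_eq_zero (s : Finset V) {x : V → ℝ}
    (hx : ∀ w ∈ s, G.adjOn s x w + l * x w = 0) : ∀ w ∈ s, x w = 0 := by
  induction s using hG.finset_induction generalizing x with
  | empty => simp
  | isolated v e hv hiso ih =>
    rw [forall_mem_insert] at hx ⊢
    have hxv : x v = 0 := by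
      have := hx.1
      rw [adjOn_insert hv, if_neg G.irrefl, adjOn_eq_zero_of_forall_not_adj hiso, zero_add,
        zero_add] at this
      exact (mul_eq_zero.1 this).resolve_left hl₀.ne'
    refine ⟨hxv, ih fun w hw => ?_⟩
    simpa [adjOn_insert hv, hxv] using hx.2 w hw
  | dominating v e hv hdom ih =>
    rw [forall_mem_insert] at hx ⊢
    obtain ⟨h, hh, hσ⟩ := hG.exists_adjOn_add_mul_eq_one hl₀ hl₁ e
    set σ := ∑ u ∈ e, h u
    have hσl : l - σ ≠ 0 := by rcases hσ with hσ | hσ <;> linarith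
    set t := x v
    have hxh : ∀ w ∈ e, (x + t • h) w = 0 := ih fun w hw => by
      have := hx.2 w hw
      rw [adjOn_insert hv, if_pos (hdom w hw).symm] at this
      simp only [map_add, map_smul, Pi.add_apply, Pi.smul_apply, smul_eq_mul]
      linear_combination this + t * hh w hw
    replace hxh : ∀ w ∈ e, x w = -(t * h w) := fun w hw =>
      eq_neg_of_add_eq_zero_left (hxh w hw)
    have ht : t * (l - σ) = 0 := by
      have := hx.1
      rw [adjOn_insert hv, if_neg G.irrefl, adjOn_eq_sum_of_forall_adj hdom,
        sum_congr rfl hxh, sum_neg_distrib, ← mul_sum] at this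
      linear_combination this
    have ht0 : t = 0 := (mul_eq_zero.1 ht).resolve_right hσl
    exact ⟨ht0, fun w hw => by simpa [ht0] using hxh w hw⟩

end

end SimpleGraph

theorem threshold_no_eigenvalue_in_open_neg_one_zero {V : Type*} [Fintype V]
    (G : SimpleGraph V) (hG : G.IsThreshold) (μ : ℝ) (hμ : G.HasAdjEigenvalue μ) :
    ¬ (-1 < μ ∧ μ < 0) := by
  rintro ⟨hμ₁, hμ₀⟩
  obtain ⟨x, hx₀, hx⟩ := hμ
  classical
  have hker : ∀ w ∈ univ, G.adjOn univ x w + -μ * x w = 0 := fun w _ => by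
    rw [SimpleGraph.adjOn_univ, hx, Pi.smul_apply, smul_eq_mul]
    ring
  exact hx₀ <| funext fun w =>
    hG.eq_zero_of_adjOn_add_mul_eq_zero (neg_pos.2 hμ₀) (neg_lt.1 hμ₁) univ hker w (mem_univ w)
end

section
/- Let h ≥ 1 and let m_1,…,m_h, n_1,…,n_h be positive integers, and let G = NSG(m_1,…,m_h; n_1,…,n_h). Then the multiplicity of −1 as an eigenvalue of the adjacency matrix of G equals Σ_{i=1}^{h} (n_i − 1) + 1 if m_h = 1, and equals Σ_{i=1}^{h} (n_i − 1) if m_h ≥ 2. -/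
/-- The multiplicity of `μ` as an eigenvalue of `G`: the dimension of
the kernel of `A(G) - μ I`. -/
noncomputable def SimpleGraph.eigMult {V : Type*} [Fintype V] (G : SimpleGraph V) (μ : ℝ) : ℕ :=
  letI := Classical.decEq V
  letI : DecidableRel G.Adj := Classical.decRel _
  Module.finrank ℝ (LinearMap.ker (Matrix.toLin' (G.adjMatrix ℝ - μ • (1 : Matrix V V ℝ))))

/-- The nested split graph `NSG(m₁,…,m_h; n₁,…,n_h)`: the vertex set is the disjoint union
of `U₁,…,U_h, V₁,…,V_h` with `|Uᵢ| = mᵢ`, `|Vᵢ| = nᵢ`; the `Vᵢ`'s form a clique,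
the `Uᵢ`'s form an independent set, and a vertex of `Uᵢ` is adjacent to a vertex of `Vⱼ`
iff `j ≤ i`. -/
def NSG (h : ℕ) (m n : Fin h → ℕ) :
    SimpleGraph ((Σ i : Fin h, Fin (m i)) ⊕ (Σ i : Fin h, Fin (n i))) where
  Adj x y :=
    match x, y with
    | Sum.inl _, Sum.inl _ => False
    | Sum.inl ⟨i, _⟩, Sum.inr ⟨j, _⟩ => j ≤ i
    | Sum.inr ⟨j, _⟩, Sum.inl ⟨i, _⟩ => j ≤ i
    | Sum.inr a, Sum.inr b => a ≠ b
  symm := by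
    constructor
    rintro (⟨i, a⟩ | ⟨i, a⟩) (⟨j, b⟩ | ⟨j, b⟩) hadj
    · exact hadj
    · exact hadj
    · exact hadj
    · exact Ne.symm hadj
  loopless := by
    constructor
    rintro (⟨i, a⟩ | ⟨i, a⟩) hadj
    · exact hadj
    · exact hadj rfl

/-!
Let `z` lie in the kernel of `A + I`, and let `s j`, `r i` be the sums of `z` over the blocks
`V_j`, `U_i`. The row of a vertex `u ∈ U_i` reads `z u = -(∑_{j ≤ i} s j)`: the coordinates on
the independent set are determined by those on the clique, and `r i = -m_i ∑_{j ≤ i} s j`.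
The row of a vertex of `V_j` reads `∑_{i ≥ j} r i = -∑_j s j`; as the right side does not
depend on `j`, `r i = 0` below the last block, hence `s i = 0` there, and the last row leaves
`(1 - m_h) s_h = 0`. So the eigenspace is a copy of the space of clique vectors whose block
sums vanish for all blocks but the last, and for the last one too unless `m_h = 1`; that space
has dimension `∑ n_j - h`, plus one when `m_h = 1`.
-/

open Finset Matrix

section FiberSum

variable {ι : Type*} {κ : ι → Type*} [∀ i, Fintype (κ i)] {R : Type*} [Semiring R]

def fiberSum : ((Σ i, κ i) → R) →ₗ[R] (ι → R) where
  toFun f i := ∑ a, f ⟨i, a⟩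
  map_add' f g := by ext i; simp [sum_add_distrib]
  map_smul' c f := by ext i; simp [mul_sum]

@[simp]
lemma fiberSum_apply (f : (Σ i, κ i) → R) (i : ι) : fiberSum f i = ∑ a, f ⟨i, a⟩ := rfl

lemma fiberSum_surjective [∀ i, Nonempty (κ i)] :
    Function.Surjective (fiberSum : ((Σ i, κ i) → R) → (ι → R)) := by
  classical
  intro g
  refine ⟨fun p => if p.2 = Classical.arbitrary _ then g p.1 else 0, funext fun i => ?_⟩
  simp only [fiberSum_apply]
  exact Fintype.sum_ite_eq' (Classical.arbitrary (κ i)) _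

end FiberSum

section FiberSumRank

variable {ι : Type*} [Fintype ι] {κ : ι → Type*} [∀ i, Fintype (κ i)] [∀ i, Nonempty (κ i)]
  {K : Type*} [Field K]

lemma finrank_ker_funLeft_comp_fiberSum (p : ι → Prop) [DecidablePred p] :
    Module.finrank K (LinearMap.ker
        (LinearMap.funLeft K K (Subtype.val : {i // p i} → ι) ∘ₗ fiberSum (κ := κ)))
      + Fintype.card {i // p i} = Fintype.card (Σ i, κ i) := by
  set F := LinearMap.funLeft K K (Subtype.val : {i // p i} → ι) ∘ₗ fiberSum (κ := κ)
  have hF : Function.Surjective F :=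
    (LinearMap.funLeft_surjective_of_injective K K _ Subtype.val_injective).comp
      fiberSum_surjective
  have := LinearMap.finrank_range_add_finrank_ker F
  rw [LinearMap.range_eq_top.2 hF, finrank_top, Module.finrank_fintype_fun_eq_card,
    Module.finrank_fintype_fun_eq_card] at this
  omega

end FiberSumRank

section PartialSums

variable {α M : Type*} [LinearOrder α] [AddCommGroup M]

lemma eq_zero_of_sum_Iic_eq_zero [LocallyFiniteOrderBot α] [WellFoundedLT α] {s : α → M} {a : α}
    (hs : ∀ i < a, ∑ j ∈ Iic i, s j = 0) : ∀ i < a, s i = 0 := by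
  intro i
  induction i using WellFoundedLT.induction with
  | _ i ih =>
    intro hi
    have hIio : ∑ j ∈ Iio i, s j = 0 :=
      sum_eq_zero fun j hj => ih j (mem_Iio.1 hj) ((mem_Iio.1 hj).trans hi)
    rw [← hs i hi, ← sum_Iio_add_eq_sum_Iic, hIio, zero_add]

lemma eq_zero_of_sum_Ici_eq_const [LocallyFiniteOrderTop α] [SuccOrder α] {r : α → M} {c : M}
    (hr : ∀ j, ∑ i ∈ Ici j, r i = c) {i : α} (hi : ¬IsMax i) : r i = 0 := by
  have := hr i
  rw [← add_sum_Ioi_eq_sum_Ici, ← Ici_succ_eq_Ioi_of_not_isMax hi, hr] at this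
  simpa using this

end PartialSums

section PartialSumSystem

variable {α : Type*} [LinearOrder α] [Fintype α] [LocallyFiniteOrderBot α]
  [LocallyFiniteOrderTop α] [OrderTop α] [SuccOrder α]

lemma forall_sum_Ici_eq_neg_sum_iff {s r μ : α → ℝ} (hμ : ∀ i, 0 < μ i)
    (hr : ∀ i, r i = -(μ i * ∑ j ∈ Iic i, s j)) :
    (∀ j, ∑ i ∈ Ici j, r i = -∑ i, s i) ↔ ∀ j, (j ≠ ⊤ ∨ μ ⊤ ≠ 1) → s j = 0 := by
  have hrtop : r ⊤ = -(μ ⊤ * ∑ i, s i) := by rw [hr, Iic_top]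
  have hS (hs : ∀ j ≠ ⊤, s j = 0) : ∑ i, s i = s ⊤ := Fintype.sum_eq_single ⊤ hs
  constructor
  · intro hV
    have hr0 (i : α) (hi : i ≠ ⊤) : r i = 0 :=
      eq_zero_of_sum_Ici_eq_const hV (not_isMax_iff_ne_top.2 hi)
    have hs : ∀ j < ⊤, s j = 0 := eq_zero_of_sum_Iic_eq_zero fun i hi => by
      have := hr0 i hi.ne
      rw [hr, neg_eq_zero] at this
      exact (mul_eq_zero.1 this).resolve_left (hμ i).ne'
    have hs' (j : α) (hj : j ≠ ⊤) : s j = 0 := hs j (lt_top_iff_ne_top.2 hj)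
    have htop : (1 - μ ⊤) * s ⊤ = 0 := by
      have := hV ⊤
      rw [show Ici (⊤ : α) = {⊤} by ext; simp, sum_singleton, hrtop, hS hs'] at this
      linear_combination this
    rintro j (hj | hμ1)
    · exact hs' j hj
    · obtain rfl | hj := eq_or_ne j ⊤
      · exact (mul_eq_zero.1 htop).resolve_left (sub_ne_zero.2 hμ1.symm)
      · exact hs' j hj
  · intro hs j
    have hs' (j : α) (hj : j ≠ ⊤) : s j = 0 := hs j (Or.inl hj)
    have hr0 (i : α) (hi : i ≠ ⊤) : r i = 0 := by
      rw [hr, sum_eq_zero fun j hj => hs' j (ne_top_of_le_ne_top hi (mem_Iic.1 hj)), mul_zero,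
        neg_zero]
    rw [sum_eq_single_of_mem ⊤ (mem_Ici.2 le_top) fun i _ hi => hr0 i hi, hrtop, hS hs']
    obtain hμ1 | hs_top := eq_or_ne (μ ⊤) 1
    · rw [hμ1, one_mul]
    · rw [hs ⊤ (Or.inr hs_top), mul_zero]

end PartialSumSystem

namespace NSG

variable {h : ℕ} {m n : Fin h → ℕ}

@[simp]
lemma not_adj_inl_inl (u u' : Σ i : Fin h, Fin (m i)) :
    ¬(NSG h m n).Adj (Sum.inl u) (Sum.inl u') := id

@[simp]
lemma adj_inl_inr {i j : Fin h} (a : Fin (m i)) (b : Fin (n j)) :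
    (NSG h m n).Adj (Sum.inl ⟨i, a⟩) (Sum.inr ⟨j, b⟩) ↔ j ≤ i := Iff.rfl

@[simp]
lemma adj_inr_inl {i j : Fin h} (a : Fin (m i)) (b : Fin (n j)) :
    (NSG h m n).Adj (Sum.inr ⟨j, b⟩) (Sum.inl ⟨i, a⟩) ↔ j ≤ i := Iff.rfl

@[simp]
lemma adj_inr_inr (v v' : Σ j : Fin h, Fin (n j)) :
    (NSG h m n).Adj (Sum.inr v) (Sum.inr v') ↔ v ≠ v' := Iff.rfl

def liftFromClique :
    ((Σ j : Fin h, Fin (n j)) → ℝ) →ₗ[ℝ] ((Σ i : Fin h, Fin (m i)) ⊕ (Σ j : Fin h, Fin (n j)) → ℝ)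
    where
  toFun y := Sum.elim (fun u => -∑ j ∈ Iic u.1, fiberSum y j) y
  map_add' y y' := by ext (u | v) <;> simp [sum_add_distrib, add_comm]
  map_smul' c y := by ext (u | v) <;> simp [mul_sum]

lemma liftFromClique_injective : Function.Injective (liftFromClique (h := h) (m := m) (n := n)) :=
  fun _ _ hyy' => funext fun v => congrFun hyy' (Sum.inr v)

variable [DecidableEq ((Σ i : Fin h, Fin (m i)) ⊕ (Σ i : Fin h, Fin (n i)))]
  [DecidableRel (NSG h m n).Adj]

lemma adjMatrix_add_one_mulVec_inl (z : (Σ i : Fin h, Fin (m i)) ⊕ (Σ i : Fin h, Fin (n i)) → ℝ)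
    (u : Σ i : Fin h, Fin (m i)) :
    (((NSG h m n).adjMatrix ℝ + 1) *ᵥ z) (Sum.inl u)
      = z (Sum.inl u) + ∑ j ∈ Iic u.1, fiberSum (z ∘ Sum.inr) j := by
  obtain ⟨i, a⟩ := u
  rw [add_mulVec, one_mulVec, Pi.add_apply, add_comm, mulVec, dotProduct, Fintype.sum_sum_type,
    ← filter_ge_eq_Iic, sum_filter]
  simp [Fintype.sum_sigma, SimpleGraph.adjMatrix_apply, ite_mul]

lemma adjMatrix_add_one_mulVec_inr (z : (Σ i : Fin h, Fin (m i)) ⊕ (Σ i : Fin h, Fin (n i)) → ℝ)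
    (v : Σ i : Fin h, Fin (n i)) :
    (((NSG h m n).adjMatrix ℝ + 1) *ᵥ z) (Sum.inr v)
      = ∑ i ∈ Ici v.1, fiberSum (z ∘ Sum.inl) i + ∑ j, fiberSum (z ∘ Sum.inr) j := by
  have hV : ∑ j, fiberSum (z ∘ Sum.inr) j = ∑ w, z (Sum.inr w) :=
    (Fintype.sum_sigma (fun w => z (Sum.inr w))).symm
  obtain ⟨j, b⟩ := v
  rw [add_mulVec, one_mulVec, Pi.add_apply, mulVec, dotProduct, Fintype.sum_sum_type, add_assoc,
    ← filter_le_eq_Ici, sum_filter, hV]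
  congr 1
  · simp [Fintype.sum_sigma, SimpleGraph.adjMatrix_apply, ite_mul]
  · simp [SimpleGraph.adjMatrix_apply, sum_ite, filter_ne]

lemma adjMatrix_add_one_mulVec_eq_zero_iff (hn : ∀ i, 1 ≤ n i)
    (z : (Σ i : Fin h, Fin (m i)) ⊕ (Σ i : Fin h, Fin (n i)) → ℝ) :
    ((NSG h m n).adjMatrix ℝ + 1) *ᵥ z = 0 ↔
      (∀ u, z (Sum.inl u) + ∑ j ∈ Iic u.1, fiberSum (z ∘ Sum.inr) j = 0) ∧
      ∀ j, ∑ i ∈ Ici j, fiberSum (z ∘ Sum.inl) i + ∑ j, fiberSum (z ∘ Sum.inr) j = 0 := by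
  simp only [funext_iff, Sum.forall, adjMatrix_add_one_mulVec_inl, adjMatrix_add_one_mulVec_inr,
    Pi.zero_apply, Sigma.forall]
  exact and_congr_right fun _ => forall_congr' fun j => ⟨fun hj => hj ⟨0, hn j⟩, fun hj _ => hj⟩

lemma mem_ker_iff [NeZero h] (hm : ∀ i, 1 ≤ m i) (hn : ∀ i, 1 ≤ n i)
    (z : (Σ i : Fin h, Fin (m i)) ⊕ (Σ i : Fin h, Fin (n i)) → ℝ) :
    z ∈ LinearMap.ker (toLin' ((NSG h m n).adjMatrix ℝ + 1)) ↔
      (∀ u, z (Sum.inl u) = -∑ j ∈ Iic u.1, fiberSum (z ∘ Sum.inr) j) ∧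
      ∀ j, (j ≠ ⊤ ∨ m ⊤ ≠ 1) → fiberSum (z ∘ Sum.inr) j = 0 := by
  rw [LinearMap.mem_ker, toLin'_apply, adjMatrix_add_one_mulVec_eq_zero_iff hn]
  simp only [add_eq_zero_iff_eq_neg]
  exact and_congr_right fun hx =>
    (forall_sum_Ici_eq_neg_sum_iff (μ := fun i => (m i : ℝ)) (fun i => by exact_mod_cast hm i)
      fun i => by simp [hx]).trans (by norm_cast)

lemma ker_eq_map_liftFromClique [NeZero h] (hm : ∀ i, 1 ≤ m i) (hn : ∀ i, 1 ≤ n i) :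
    LinearMap.ker (toLin' ((NSG h m n).adjMatrix ℝ + 1)) =
      (LinearMap.ker (LinearMap.funLeft ℝ ℝ (Subtype.val : {j // j ≠ ⊤ ∨ m ⊤ ≠ 1} → Fin h) ∘ₗ
        fiberSum)).map liftFromClique := by
  ext z
  rw [mem_ker_iff hm hn, Submodule.mem_map]
  constructor
  · rintro ⟨hx, hs⟩
    refine ⟨z ∘ Sum.inr, ?_, ?_⟩
    · ext ⟨j, hj⟩
      exact hs j hj
    · ext (u | v)
      · exact (hx u).symm
      · rfl
  · rintro ⟨y, hy, rfl⟩
    exact ⟨fun u => rfl, fun j hj => congrFun hy ⟨j, hj⟩⟩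

end NSG

theorem nsg_mult_neg_one (h : ℕ) (hh : 1 ≤ h) (m n : Fin h → ℕ)
    (hm : ∀ i, 1 ≤ m i) (hn : ∀ i, 1 ≤ n i) :
    (NSG h m n).eigMult (-1) =
      if m ⟨h - 1, by omega⟩ = 1 then (∑ i : Fin h, (n i - 1)) + 1
      else ∑ i : Fin h, (n i - 1) := by
  have : NeZero h := ⟨by omega⟩
  have : ∀ i, Nonempty (Fin (n i)) := fun i => ⟨⟨0, hn i⟩⟩
  have hrank := finrank_ker_funLeft_comp_fiberSum (K := ℝ) (κ := fun i => Fin (n i))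
    fun j : Fin h => j ≠ ⊤ ∨ m ⊤ ≠ 1
  have hsum : ∑ i : Fin h, (n i - 1) + h = ∑ i, n i := by
    calc ∑ i : Fin h, (n i - 1) + h = ∑ i, (n i - 1 + 1) := by simp [sum_add_distrib]
      _ = ∑ i, n i := sum_congr rfl fun i _ => Nat.sub_add_cancel (hn i)
  rw [SimpleGraph.eigMult, neg_smul, one_smul, sub_neg_eq_add,
    @NSG.ker_eq_map_liftFromClique _ _ _ (Classical.decEq _) (Classical.decRel _) _ hm hn,
    ← (Submodule.equivMapOfInjective _ NSG.liftFromClique_injective _).finrank_eq]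
  simp only [Fintype.card_sigma, Fintype.card_fin] at hrank
  change _ = if m ⊤ = 1 then _ else _
  split_ifs with hm1
  · have hcard : Fintype.card {j : Fin h // j ≠ ⊤ ∨ m ⊤ ≠ 1} = h - 1 := by simp [hm1]
    omega
  · have hcard : Fintype.card {j : Fin h // j ≠ ⊤ ∨ m ⊤ ≠ 1} = h := by simp [hm1]
    omega
end
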